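/- arXiv:2310.00976 — 5 statements merged into one kernel-verified Lean document; each statement's English description precedes it below -/
import Mathlib

section
/- There exists a two-agent, three-good instance in which MMS_1 = MMS_2 = 1 and every allocation gives some agent i utility u_i(x_i) ≤ (2/3)·MMS_i. Concretely: both agents value every good at 2/3; good g_1 is indivisible for both agents; good g_2 is indivisible for agent 1 and divisible for agent 2; good g_3 is divisible for agent 1 and indivisible for agent 2. Hence for two agents the worst-case MMS approximation guarantee is at most 2/3. -/
open scoped BigOperators Classical

/-- An instance of fair division with subjective divisibility: `n` agents and `m` goods,
each good of total amount 1.  Each agent `i` assigns a nonnegative value `v i g` to each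
good `g` and regards each good as either divisible or indivisible for her. -/
structure FairDivision (n m : ℕ) where
  /-- agent `i`'s value for good `g` -/
  v : Fin n → Fin m → ℝ
  v_nonneg : ∀ i g, 0 ≤ v i g
  /-- `divisible i g` means agent `i` regards good `g` as divisible -/
  divisible : Fin n → Fin m → Prop

namespace FairDivision

variable {n m : ℕ}

/-- Agent `i`'s utility from receiving fraction `t ∈ [0,1]` of good `g`:
`t * v i g` if `g` is divisible for `i`; `v i g` if `g` is indivisible for `i` and `t = 1`;
and `0` if `g` is indivisible for `i` and `t < 1`. -/
noncomputable def frUtil (I : FairDivision n m) (i : Fin n) (g : Fin m) (t : ℝ) : ℝ :=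
  if I.divisible i g then t * I.v i g else if t = 1 then I.v i g else 0

/-- Agent `i`'s (additive) utility for a bundle `b`, given by the fraction `b g` of each good. -/
noncomputable def util (I : FairDivision n m) (i : Fin n) (b : Fin m → ℝ) : ℝ :=
  ∑ g, I.frUtil i g (b g)

/-- Agent `i`'s utility for the bundle `b` with good `g` omitted. -/
noncomputable def utilMinus (I : FairDivision n m) (i : Fin n) (b : Fin m → ℝ) (g : Fin m) : ℝ :=
  ∑ g' ∈ Finset.univ.erase g, I.frUtil i g' (b g')

/-- A complete allocation: fractions in `[0,1]` summing to `1` for every good. -/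
def IsAllocation (I : FairDivision n m) (x : Fin n → Fin m → ℝ) : Prop :=
  (∀ i g, 0 ≤ x i g ∧ x i g ≤ 1) ∧ ∀ g, ∑ i, x i g = 1

/-- A partial allocation: fractions in `[0,1]` summing to at most `1` for every good. -/
def IsPartialAllocation (I : FairDivision n m) (x : Fin n → Fin m → ℝ) : Prop :=
  (∀ i g, 0 ≤ x i g ∧ x i g ≤ 1) ∧ ∀ g, ∑ i, x i g ≤ 1

/-- The maximin share of agent `i`: the supremum, over all fractional `n`-partitions
`P` of the goods, of the minimum over the parts `P j` of agent `i`'s utility. -/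
noncomputable def MMS (I : FairDivision n m) (i : Fin n) : ℝ :=
  sSup { r : ℝ | ∃ P : Fin n → Fin m → ℝ, I.IsAllocation P ∧ r = ⨅ j, I.util i (P j) }

/-- Non-wastefulness: every positive fraction an agent receives yields her positive utility. -/
def NonWasteful (I : FairDivision n m) (x : Fin n → Fin m → ℝ) : Prop :=
  ∀ i g, 0 < x i g → 0 < I.frUtil i g (x i g)

/-- Envy-freeness. -/
def EF (I : FairDivision n m) (x : Fin n → Fin m → ℝ) : Prop :=
  ∀ i j, I.util i (x j) ≤ I.util i (x i)

/-- Envy-freeness for mixed goods: for all agents `i, j`, if every good `j` receives a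
positive fraction of is indivisible for `i`, then `i` does not envy `j` after removing some
such good from `j`'s bundle; otherwise `i` does not envy `j`. -/
def EFM (I : FairDivision n m) (x : Fin n → Fin m → ℝ) : Prop :=
  ∀ i j,
    ((∀ g, 0 < x j g → ¬ I.divisible i g) →
      ∃ g, 0 < x j g ∧ I.utilMinus i (x j) g ≤ I.util i (x i)) ∧
    ((¬ ∀ g, 0 < x j g → ¬ I.divisible i g) → I.util i (x j) ≤ I.util i (x i))

/-- EFXM: as EFM, but the envy must vanish after removing any positively valued such good. -/
def EFXM (I : FairDivision n m) (x : Fin n → Fin m → ℝ) : Prop :=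
  ∀ i j,
    ((∀ g, 0 < x j g → ¬ I.divisible i g) →
      ∀ g, 0 < x j g → 0 < I.v i g → I.utilMinus i (x j) g ≤ I.util i (x i)) ∧
    ((¬ ∀ g, 0 < x j g → ¬ I.divisible i g) → I.util i (x j) ≤ I.util i (x i))

/-- EF1M: if `j`'s bundle contains (a positive fraction of) some good that `i` regards as
indivisible and values positively, the envy of `i` must vanish after removing some such good;
otherwise `i` does not envy `j`. -/
def EF1M (I : FairDivision n m) (x : Fin n → Fin m → ℝ) : Prop :=
  ∀ i j,
    ((∃ g, 0 < x j g ∧ ¬ I.divisible i g ∧ 0 < I.v i g) →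
      ∃ g, 0 < x j g ∧ ¬ I.divisible i g ∧ 0 < I.v i g ∧
        I.utilMinus i (x j) g ≤ I.util i (x i)) ∧
    ((¬ ∃ g, 0 < x j g ∧ ¬ I.divisible i g ∧ 0 < I.v i g) → I.util i (x j) ≤ I.util i (x i))

/-- Pareto optimality (among complete allocations). -/
def ParetoOptimal (I : FairDivision n m) (x : Fin n → Fin m → ℝ) : Prop :=
  ¬ ∃ y, I.IsAllocation y ∧ (∀ i, I.util i (x i) ≤ I.util i (y i)) ∧
    ∃ i, I.util i (x i) < I.util i (y i)

/-- In a 3-agent instance, `B` (a set of whole goods) is a reducible bundle with respect to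
agent `i`: `u_i(B) ≥ (2/3)·MMS_i`, `u_j(M∖B) ≥ 2·MMS_j` for some agent `j ≠ i`, and
`u_k(M∖B) ≥ (4/3)·MMS_k` for the remaining agent `k`. -/
def IsReducible (I : FairDivision 3 m) (B : Finset (Fin m)) (i : Fin 3) : Prop :=
  2 / 3 * I.MMS i ≤ ∑ g ∈ B, I.v i g ∧
    ∃ j, j ≠ i ∧ 2 * I.MMS j ≤ ∑ g ∈ Bᶜ, I.v j g ∧
      ∀ k, k ≠ i → k ≠ j → 4 / 3 * I.MMS k ≤ ∑ g ∈ Bᶜ, I.v k g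

end FairDivision

namespace FairDivision

variable {n m : ℕ} (I : FairDivision n m)

theorem frUtil_le_mul (i : Fin n) (g : Fin m) {t : ℝ} (ht : 0 ≤ t) :
    I.frUtil i g t ≤ t * I.v i g := by
  unfold frUtil
  split_ifs with _ h₁
  · exact le_rfl
  · simp [h₁]
  · exact mul_nonneg ht (I.v_nonneg i g)

theorem sum_util_le {P : Fin n → Fin m → ℝ} (hP : I.IsAllocation P) (i : Fin n) :
    ∑ j, I.util i (P j) ≤ ∑ g, I.v i g :=
  calc ∑ j, I.util i (P j) ≤ ∑ j, ∑ g, P j g * I.v i g :=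
        Finset.sum_le_sum fun j _ => Finset.sum_le_sum fun g _ =>
          I.frUtil_le_mul i g (hP.1 j g).1
    _ = ∑ g, I.v i g := by simp [Finset.sum_comm (f := fun j g => P j g * I.v i g),
          ← Finset.sum_mul, hP.2]

theorem iInf_util_le_average [NeZero n] {P : Fin n → Fin m → ℝ} (hP : I.IsAllocation P)
    (i : Fin n) : ⨅ j, I.util i (P j) ≤ (∑ g, I.v i g) / n := by
  obtain ⟨j, -, hj⟩ := Finset.exists_le_of_sum_le Finset.univ_nonempty
    (f := fun j => I.util i (P j)) (g := fun _ => (∑ g, I.v i g) / n) <| by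
      simpa [mul_div_cancel₀ _ (NeZero.ne (n : ℝ))] using I.sum_util_le hP i
  exact (ciInf_le (Set.finite_range _).bddBelow j).trans hj

theorem MMS_le_average [NeZero n] (i : Fin n) : I.MMS i ≤ (∑ g, I.v i g) / n :=
  Real.sSup_le (fun _ ⟨_, hP, hr⟩ => hr ▸ I.iInf_util_le_average hP i) <|
    div_nonneg (Finset.sum_nonneg fun g _ => I.v_nonneg i g) n.cast_nonneg

theorem le_MMS [NeZero n] {i : Fin n} {P : Fin n → Fin m → ℝ} {r : ℝ} (hP : I.IsAllocation P)
    (h : ∀ j, r ≤ I.util i (P j)) : r ≤ I.MMS i :=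
  (le_ciInf h).trans <| le_csSup
    ⟨_, fun _ ⟨_, hQ, hr⟩ => hr ▸ I.iInf_util_le_average hQ i⟩ ⟨P, hP, rfl⟩

end FairDivision

open FairDivision

noncomputable def twoThirdsExample : FairDivision 2 3 where
  v _ _ := 2 / 3
  v_nonneg _ _ := by norm_num
  divisible i g := (i = 0 ∧ g = 2) ∨ (i = 1 ∧ g = 1)

@[simp]
theorem twoThirdsExample_v (i : Fin 2) (g : Fin 3) : twoThirdsExample.v i g = 2 / 3 := rfl

theorem twoThirdsExample_util_zero (b : Fin 3 → ℝ) :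
    twoThirdsExample.util 0 b =
      (if b 0 = 1 then 2 / 3 else 0) + (if b 1 = 1 then 2 / 3 else 0) + b 2 * (2 / 3) := by
  simp [util, frUtil, Fin.sum_univ_three, twoThirdsExample]

theorem twoThirdsExample_util_one (b : Fin 3 → ℝ) :
    twoThirdsExample.util 1 b =
      (if b 0 = 1 then 2 / 3 else 0) + b 1 * (2 / 3) + (if b 2 = 1 then 2 / 3 else 0) := by
  simp [util, frUtil, Fin.sum_univ_three, twoThirdsExample]

theorem twoThirdsExample_MMS (i : Fin 2) : twoThirdsExample.MMS i = 1 := by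
  refine le_antisymm ((twoThirdsExample.MMS_le_average i).trans_eq (by norm_num)) ?_
  -- agent `i` pairs good `0` and her other indivisible good each with half of her divisible good
  fin_cases i
  · refine twoThirdsExample.le_MMS (P := ![![1, 0, 1 / 2], ![0, 1, 1 / 2]]) ⟨?_, ?_⟩ ?_
    · intro j g; fin_cases j <;> fin_cases g <;> norm_num
    · intro g; fin_cases g <;> norm_num
    · intro j; fin_cases j <;> norm_num [twoThirdsExample_util_zero, Matrix.cons_val_two]
  · refine twoThirdsExample.le_MMS (P := ![![1, 1 / 2, 0], ![0, 1 / 2, 1]]) ⟨?_, ?_⟩ ?_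
    · intro j g; fin_cases j <;> fin_cases g <;> norm_num
    · intro g; fin_cases g <;> norm_num
    · intro j; fin_cases j <;> norm_num [twoThirdsExample_util_one, Matrix.cons_val_two]

-- An agent exceeds `2 / 3` only with a whole indivisible good plus a positive share of another
-- good. Good `0` goes whole to at most one agent, and the goods `1` and `2` are each wanted whole
-- by one agent and in part by the other, so the two demands always collide.
theorem twoThirdsExample_exists_util_le {x : Fin 2 → Fin 3 → ℝ}
    (hx : twoThirdsExample.IsAllocation x) : ∃ i, twoThirdsExample.util i (x i) ≤ 2 / 3 := by
  by_contra! h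
  have h₀ := h 0
  have h₁ := h 1
  rw [twoThirdsExample_util_zero] at h₀
  rw [twoThirdsExample_util_one] at h₁
  have hsum : ∀ g, x 0 g + x 1 g = 1 := fun g => by simpa [Fin.sum_univ_two] using hx.2 g
  have := hsum 0; have := hsum 1; have := hsum 2
  have := (hx.1 0 2).2; have := (hx.1 1 1).2
  split_ifs at h₀ h₁ <;> linarith

/-- There exists a two-agent, three-good instance (both agents value every good
at 2/3; `g_1` indivisible for both; `g_2` indivisible for agent 1 and divisible for agent 2;
`g_3` divisible for agent 1 and indivisible for agent 2) in which `MMS_1 = MMS_2 = 1` and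
every allocation gives some agent `i` utility at most `(2/3) * MMS_i`. -/
theorem two_agent_mms_at_most_two_thirds :
    ∃ I : FairDivision 2 3,
      (∀ i g, I.v i g = 2 / 3) ∧
      (∀ i g, I.divisible i g ↔ (i = 0 ∧ g = 2) ∨ (i = 1 ∧ g = 1)) ∧
      (∀ i, I.MMS i = 1) ∧
      (∀ x, I.IsAllocation x → ∃ i, I.util i (x i) ≤ 2 / 3 * I.MMS i) :=
  ⟨twoThirdsExample, twoThirdsExample_v, fun _ _ => Iff.rfl, twoThirdsExample_MMS,
    fun _ hx => by simpa [twoThirdsExample_MMS] using twoThirdsExample_exists_util_le hx⟩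
end

section
/- Consider a two-agent instance with MMS_1 > 0 and MMS_2 > 0 that contains no (2/3)-high-valued good, i.e., v_a(g) < (2/3)·MMS_a for every agent a and good g. Let i* be an agent minimizing u_a(M)/MMS_a over the two agents, where u_a(M) = ∑_g v_a(g). Then there exists an allocation x that is (2/3)-MMS and in addition satisfies u_{i*}(x_{i*}) ≥ u_{i*}(M)/2. -/
open scoped BigOperators Classical

namespace FairDivision

variable {m : ℕ}

lemma frUtil_le_aux (I : FairDivision 2 m) (i : Fin 2) (g : Fin m) {t : ℝ} (ht : 0 ≤ t) :
    I.frUtil i g t ≤ t * I.v i g := by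
  unfold frUtil
  split_ifs with h1 h2
  · exact le_rfl
  · rw [h2, one_mul]
  · exact mul_nonneg ht (I.v_nonneg i g)

lemma util_indicator_aux (I : FairDivision 2 m) (i : Fin 2) (A : Finset (Fin m)) :
    I.util i (fun g => if g ∈ A then (1:ℝ) else 0) = ∑ g ∈ A, I.v i g := by
  have h : ∀ g, I.frUtil i g (if g ∈ A then (1:ℝ) else 0) = if g ∈ A then I.v i g else 0 := by
    intro g
    by_cases hg : g ∈ A
    · simp only [if_pos hg]
      by_cases hd : I.divisible i g <;> simp [frUtil, hd]
    · simp only [if_neg hg]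
      by_cases hd : I.divisible i g <;> simp [frUtil, hd]
  simp only [util, h, Finset.sum_ite_mem, Finset.univ_inter]

lemma MMS_le_half_aux (I : FairDivision 2 m) (i : Fin 2) :
    I.MMS i ≤ (∑ g, I.v i g) / 2 := by
  apply Real.sSup_le
  · rintro r ⟨P, ⟨hPbd, hPsum⟩, rfl⟩
    have hb : ∀ j : Fin 2, I.util i (P j) ≤ ∑ g, P j g * I.v i g := fun j =>
      Finset.sum_le_sum fun g _ => I.frUtil_le_aux i g (hPbd j g).1
    have hbdd : BddBelow (Set.range fun j : Fin 2 => I.util i (P j)) :=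
      Set.Finite.bddBelow (Set.finite_range _)
    have h0 : (⨅ j, I.util i (P j)) ≤ I.util i (P 0) := ciInf_le hbdd 0
    have h1 : (⨅ j, I.util i (P j)) ≤ I.util i (P 1) := ciInf_le hbdd 1
    have hsum : ∑ g, P 0 g * I.v i g + ∑ g, P 1 g * I.v i g = ∑ g, I.v i g := by
      rw [← Finset.sum_add_distrib]
      refine Finset.sum_congr rfl fun g _ => ?_
      have h := hPsum g
      rw [Fin.sum_univ_two] at h
      calc P 0 g * I.v i g + P 1 g * I.v i g = (P 0 g + P 1 g) * I.v i g := by ring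
        _ = 1 * I.v i g := by rw [h]
        _ = I.v i g := one_mul _
    linarith [h0.trans (hb 0), h1.trans (hb 1)]
  · have : (0:ℝ) ≤ ∑ g, I.v i g := Finset.sum_nonneg fun g _ => I.v_nonneg i g
    linarith

lemma fin2_other_aux {i j : Fin 2} (h : i ≠ j) : i = j + 1 := by
  fin_cases i <;> fin_cases j <;> simp_all <;> rfl

/-- Build the allocation giving the whole goods in `A` to `istar` and the rest to the other
agent. -/
lemma build_aux (I : FairDivision 2 m) (istar : Fin 2) (A : Finset (Fin m))
    (h1 : 2 / 3 * I.MMS istar ≤ ∑ g ∈ A, I.v istar g)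
    (h2 : (∑ g, I.v istar g) / 2 ≤ ∑ g ∈ A, I.v istar g)
    (h3 : 2 / 3 * I.MMS (istar + 1) ≤ ∑ g ∈ Aᶜ, I.v (istar + 1) g) :
    ∃ x, I.IsAllocation x ∧ (∀ i, 2 / 3 * I.MMS i ≤ I.util i (x i)) ∧
      (∑ g, I.v istar g) / 2 ≤ I.util istar (x istar) := by
  classical
  refine ⟨fun i g => if i = istar then (if g ∈ A then (1:ℝ) else 0)
      else (if g ∈ Aᶜ then (1:ℝ) else 0), ⟨?_, ?_⟩, ?_, ?_⟩
  · intro i g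
    dsimp only
    split_ifs <;> norm_num
  · intro g
    rw [Fin.sum_univ_two]
    fin_cases istar <;> by_cases hg : g ∈ A <;> simp [hg]
  · intro i
    by_cases hi : i = istar
    · subst hi
      simpa [util_indicator_aux] using h1
    · have hij : i = istar + 1 := fin2_other_aux hi
      simp only [if_neg hi]
      rw [util_indicator_aux]
      rw [hij]
      exact h3
  · simpa [util_indicator_aux] using h2

end FairDivision

/-- In a two-agent instance with positive maximin shares and no (2/3)-high-valued
good, if `istar` minimizes `u_a(M) / MMS_a`, then there is a (2/3)-MMS allocation that moreover
gives `istar` at least half of her value for all the goods. -/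
theorem two_agent_no_high_valued_good (m : ℕ) (I : FairDivision 2 m)
    (hMMS : ∀ i, 0 < I.MMS i)
    (hNoHigh : ∀ a g, I.v a g < 2 / 3 * I.MMS a)
    (istar : Fin 2)
    (hstar : ∀ a, (∑ g, I.v istar g) / I.MMS istar ≤ (∑ g, I.v a g) / I.MMS a) :
    ∃ x, I.IsAllocation x ∧ (∀ i, 2 / 3 * I.MMS i ≤ I.util i (x i)) ∧
      (∑ g, I.v istar g) / 2 ≤ I.util istar (x istar) := by
  classical
  set j : Fin 2 := istar + 1 with hjdef
  set Sstar : ℝ := ∑ g, I.v istar g with hSdef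
  have hS : 2 * I.MMS istar ≤ Sstar := by
    have := I.MMS_le_half_aux istar; linarith
  have hSj : 2 * I.MMS j ≤ ∑ g, I.v j g := by
    have := I.MMS_le_half_aux j; linarith
  have hSpos : 0 < Sstar := lt_of_lt_of_le (by linarith [hMMS istar]) hS
  -- minimal-cardinality set B with value at least half for istar
  have huniv : Finset.univ ∈ Finset.univ.filter
      (fun B : Finset (Fin m) => Sstar / 2 ≤ ∑ g ∈ B, I.v istar g) := by
    simp only [Finset.mem_filter, Finset.mem_univ, true_and]
    rw [← hSdef]; linarith
  obtain ⟨B, hB𝒮, hBmin⟩ := Finset.exists_min_image _ Finset.card ⟨_, huniv⟩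
  have hB : Sstar / 2 ≤ ∑ g ∈ B, I.v istar g := by
    simpa using (Finset.mem_filter.mp hB𝒮).2
  have hBerase : ∀ g ∈ B, ∑ g' ∈ B.erase g, I.v istar g' < Sstar / 2 := by
    intro g hg
    by_contra h
    push_neg at h
    have hmem : B.erase g ∈ Finset.univ.filter
        (fun B : Finset (Fin m) => Sstar / 2 ≤ ∑ g ∈ B, I.v istar g) := by
      simp only [Finset.mem_filter, Finset.mem_univ, true_and]; exact h
    have hcard := hBmin _ hmem
    have := Finset.card_erase_lt_of_mem hg
    omega
  have h23 : 2 / 3 * I.MMS istar ≤ Sstar / 2 := by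
    have := hMMS istar; linarith
  by_cases hc : 2 / 3 * I.MMS j ≤ ∑ g ∈ Bᶜ, I.v j g
  · exact I.build_aux istar B (le_trans h23 hB) hB hc
  · push_neg at hc
    have hsplit : ∑ g ∈ B, I.v j g + ∑ g ∈ Bᶜ, I.v j g = ∑ g, I.v j g :=
      Finset.sum_add_sum_compl B _
    have hBj : 4 / 3 * I.MMS j < ∑ g ∈ B, I.v j g := by linarith
    have hBne : B.Nonempty := by
      rcases Finset.eq_empty_or_nonempty B with h | h
      · rw [h] at hB; simp at hB; linarith
      · exact h
    obtain ⟨g0, hg0⟩ := hBne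
    have herase : ∑ g' ∈ B.erase g0, I.v j g' + I.v j g0 = ∑ g ∈ B, I.v j g :=
      Finset.sum_erase_add _ _ hg0
    have hjgood : 2 / 3 * I.MMS j < ∑ g' ∈ B.erase g0, I.v j g' := by
      have := hNoHigh j g0; linarith
    have hA2 : Sstar / 2 ≤ ∑ g ∈ (B.erase g0)ᶜ, I.v istar g := by
      have hsplit2 : ∑ g ∈ B.erase g0, I.v istar g + ∑ g ∈ (B.erase g0)ᶜ, I.v istar g
          = Sstar := Finset.sum_add_sum_compl _ _
      have := hBerase g0 hg0
      linarith
    have hA3 : 2 / 3 * I.MMS j ≤ ∑ g ∈ ((B.erase g0)ᶜ)ᶜ, I.v j g := by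
      rw [compl_compl]; linarith
    exact I.build_aux istar (B.erase g0)ᶜ (le_trans h23 hA2) hA2 hA3
end

section
/- Consider a three-agent instance in which v_a(g) < (2/3)·MMS_a for every agent a and every good g (no (2/3)-high-valued good). If there exists a reducible bundle with respect to some agent, then the instance admits a (2/3)-MMS allocation. -/
open scoped BigOperators Classical

/-!
Agent `i` takes the reducible bundle `B`; the other two agents `j` and `k` split `T = M ∖ B` into
whole goods. Write `c = (2/3)·MMS`, so `v_j(T) ≥ 3 c_j`, every good is worth less than `c_j` to
`j`, and `v_k(T) ≥ 2 c_k`. Let `S ⊆ T` be inclusion-minimal with `v_k(S) ≥ c_k`. If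
`v_j(S) ≤ 2 c_j`, then `k` takes `S` and `j` the rest. Otherwise, dropping any good `g` from `S`
leaves `v_j(S ∖ g) > c_j` and, by minimality, `v_k(S ∖ g) < c_k`, so `j` takes `S ∖ g` and `k`
the rest.
-/

theorem Fin.exists_ne_ne_three {i j : Fin 3} (hij : i ≠ j) :
    ∃ k, k ≠ i ∧ k ≠ j ∧ ∀ a, a ≠ i → a ≠ j → a = k := by
  revert i j
  decide

theorem Finset.exists_subset_two_agent_split {α : Type*} [DecidableEq α] {T : Finset α}
    {vj vk : α → ℝ} {cj ck : ℝ} (hvk : ∀ g, 0 ≤ vk g) (hsmall : ∀ g ∈ T, vj g < cj)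
    (hTj : 3 * cj ≤ ∑ g ∈ T, vj g) (hTk : 2 * ck ≤ ∑ g ∈ T, vk g) :
    ∃ S ⊆ T, cj ≤ ∑ g ∈ S, vj g ∧ ck ≤ ∑ g ∈ T \ S, vk g := by
  have hTk' : ck ≤ ∑ g ∈ T, vk g := by linarith [sum_nonneg fun g (_ : g ∈ T) => hvk g]
  obtain ⟨S, hST, hSmin⟩ :=
    exists_minimal_le_of_wellFoundedLT (fun S => ck ≤ ∑ g ∈ S, vk g) T hTk'
  have hS_erase : ∀ g ∈ S, ∑ x ∈ S.erase g, vk x < ck := fun g hg =>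
    lt_of_not_ge fun h => notMem_erase g S (hSmin.2 h (erase_subset g S) hg)
  by_cases hSj : ∑ g ∈ S, vj g ≤ 2 * cj
  · refine ⟨T \ S, sdiff_subset, ?_, ?_⟩
    · rw [sum_sdiff_eq_sub hST]
      linarith
    · rw [sdiff_sdiff_eq_self hST]
      exact hSmin.1
  rcases S.eq_empty_or_nonempty with rfl | ⟨g, hg⟩
  · rw [sum_empty] at hSj
    exact ⟨∅, empty_subset T, by simp only [sum_empty]; linarith, by simpa using hTk'⟩
  · refine ⟨S.erase g, (erase_subset g S).trans hST, ?_, ?_⟩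
    · linarith [sum_erase_add S vj hg, hsmall g (hST hg)]
    · rw [sum_sdiff_eq_sub ((erase_subset g S).trans hST)]
      linarith [hS_erase g hg]

namespace FairDivision

variable {n m : ℕ}

def ofAssignment (σ : Fin m → Fin n) : Fin n → Fin m → ℝ :=
  fun a g => if σ g = a then 1 else 0

theorem isAllocation_ofAssignment (I : FairDivision n m) (σ : Fin m → Fin n) :
    I.IsAllocation (ofAssignment σ) := by
  refine ⟨fun a g => ?_, fun g => ?_⟩
  · unfold ofAssignment
    split_ifs <;> norm_num
  · simp [ofAssignment]

theorem frUtil_one (I : FairDivision n m) (i : Fin n) (g : Fin m) : I.frUtil i g 1 = I.v i g := by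
  simp [frUtil]

theorem frUtil_zero (I : FairDivision n m) (i : Fin n) (g : Fin m) : I.frUtil i g 0 = 0 := by
  simp [frUtil]

theorem sum_le_util_ofAssignment (I : FairDivision n m) {σ : Fin m → Fin n} {a : Fin n}
    {S : Finset (Fin m)} (hS : ∀ g ∈ S, σ g = a) :
    ∑ g ∈ S, I.v a g ≤ I.util a (ofAssignment σ a) := by
  have hutil : I.util a (ofAssignment σ a) = ∑ g with σ g = a, I.v a g := by
    rw [util, Finset.sum_filter]
    refine Finset.sum_congr rfl fun g _ => ?_
    unfold ofAssignment
    split_ifs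
    · exact frUtil_one I a g
    · exact frUtil_zero I a g
  rw [hutil]
  exact Finset.sum_le_sum_of_subset_of_nonneg (fun g hg => by simp [hS g hg])
    fun g _ _ => I.v_nonneg a g

end FairDivision

/-- A three-agent instance with no (2/3)-high-valued good that has a reducible
bundle with respect to some agent admits a (2/3)-MMS allocation. -/
theorem three_agent_reducible_bundle (m : ℕ) (I : FairDivision 3 m)
    (hNoHigh : ∀ a g, I.v a g < 2 / 3 * I.MMS a)
    (hRed : ∃ (B : Finset (Fin m)) (i : Fin 3), I.IsReducible B i) :
    ∃ x, I.IsAllocation x ∧ ∀ i, 2 / 3 * I.MMS i ≤ I.util i (x i) := by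
  obtain ⟨B, i, hiB, j, hji, hjB, hkB⟩ := hRed
  obtain ⟨k, hki, hkj, hk⟩ := Fin.exists_ne_ne_three hji.symm
  obtain ⟨S, hSB, hjS, hkS⟩ := Finset.exists_subset_two_agent_split (T := Bᶜ)
    (cj := 2 / 3 * I.MMS j) (ck := 2 / 3 * I.MMS k) (I.v_nonneg k) (fun g _ => hNoHigh j g)
    (by linarith) (by linarith [hkB k hki hkj])
  let σ : Fin m → Fin 3 := fun g => if g ∈ B then i else if g ∈ S then j else k
  refine ⟨FairDivision.ofAssignment σ, I.isAllocation_ofAssignment σ, fun a => ?_⟩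
  by_cases hai : a = i
  · subst hai
    exact hiB.trans (I.sum_le_util_ofAssignment fun g hg => if_pos hg)
  by_cases haj : a = j
  · subst haj
    refine hjS.trans (I.sum_le_util_ofAssignment fun g hg => ?_)
    simp [σ, Finset.mem_compl.mp (hSB hg), hg]
  · obtain rfl := hk a hai haj
    refine hkS.trans (I.sum_le_util_ofAssignment fun g hg => ?_)
    simp only [Finset.mem_sdiff, Finset.mem_compl] at hg
    simp [σ, hg.1, hg.2]
end

section
/- Consider a three-agent instance with good set M that contains no (2/3)-high-valued good, i.e., v_a(g) < (2/3)·MMS_a for every agent a and good g. If no subset of whole goods is a reducible bundle with respect to any agent, then the following hold simultaneously: (i) for every pair of goods g, g', either u_a({g,g'}) > MMS_a for all three agents a, or u_a({g,g'}) < (2/3)·MMS_a for all three agents a; (ii) there exists a pair of goods o, o' with u_a({o,o'}) > MMS_a for all three agents a; (iii) for every agent a, ∑_{g : v_a(g) ≤ MMS_a/3} v_a(g) < MMS_a/6. -/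
open scoped BigOperators Classical

section AuxLemmas

variable {m : ℕ}

lemma FD_exists_ne (b : Fin 3) : ∃ j : Fin 3, j ≠ b := by
  by_cases h : b = 0
  · exact ⟨1, by rw [h]; decide⟩
  · exact ⟨0, fun hc => h hc.symm⟩

lemma FD_mms_le_third (I : FairDivision 3 m) (i : Fin 3) :
    3 * I.MMS i ≤ ∑ g, I.v i g := by
  have htot : (0:ℝ) ≤ ∑ g, I.v i g := Finset.sum_nonneg fun g _ => I.v_nonneg i g
  have h : I.MMS i ≤ (∑ g, I.v i g) / 3 := by
    apply Real.sSup_le _ (by linarith)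
    rintro x ⟨P, hP, rfl⟩
    have hb : BddBelow (Set.range fun j => I.util i (P j)) :=
      (Set.finite_range _).bddBelow
    have hle : ∀ j, (⨅ j, I.util i (P j)) ≤ I.util i (P j) := fun j => ciInf_le hb j
    have key : ∀ g : Fin m, ∑ j : Fin 3, I.frUtil i g (P j g) ≤ I.v i g := by
      intro g
      have h1 : ∀ j : Fin 3, I.frUtil i g (P j g) ≤ P j g * I.v i g := by
        intro j
        unfold FairDivision.frUtil
        split_ifs with hd h2
        · exact le_rfl
        · rw [h2, one_mul]
        · exact mul_nonneg (hP.1 j g).1 (I.v_nonneg i g)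
      have h2 : ∑ j : Fin 3, I.frUtil i g (P j g) ≤ ∑ j : Fin 3, P j g * I.v i g :=
        Finset.sum_le_sum fun j _ => h1 j
      have h3 : ∑ j : Fin 3, P j g * I.v i g = I.v i g := by
        rw [← Finset.sum_mul, hP.2 g, one_mul]
      linarith
    have hsum : ∑ j : Fin 3, I.util i (P j) ≤ ∑ g, I.v i g := by
      have e : ∑ j : Fin 3, I.util i (P j) = ∑ g, ∑ j : Fin 3, I.frUtil i g (P j g) := by
        unfold FairDivision.util
        rw [Finset.sum_comm]
      rw [e]
      exact Finset.sum_le_sum fun g _ => key g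
    have h3 : 3 * (⨅ j, I.util i (P j)) ≤ ∑ j : Fin 3, I.util i (P j) := by
      have e0 := hle 0; have e1 := hle 1; have e2 := hle 2
      rw [Fin.sum_univ_three]
      linarith
    linarith
  linarith

lemma FD_sum_compl (I : FairDivision 3 m) (B : Finset (Fin m)) (c : Fin 3) :
    ∑ g ∈ Bᶜ, I.v c g = (∑ g, I.v c g) - ∑ g ∈ B, I.v c g := by
  have := Finset.sum_add_sum_compl B (I.v c)
  linarith

lemma FD_mms_pos (I : FairDivision 3 m)
    (hNoRed : ∀ (B : Finset (Fin m)) (i : Fin 3), ¬ I.IsReducible B i) (i : Fin 3) :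
    0 < I.MMS i := by
  by_contra h
  push_neg at h
  apply hNoRed ∅ i
  constructor
  · rw [Finset.sum_empty]; linarith
  · obtain ⟨j, hj⟩ := FD_exists_ne i
    have key : ∀ c : Fin 3, ∑ g ∈ (∅ : Finset (Fin m))ᶜ, I.v c g = ∑ g, I.v c g := by
      intro c; rw [FD_sum_compl, Finset.sum_empty, sub_zero]
    have tot : ∀ c : Fin 3, (0:ℝ) ≤ ∑ g, I.v c g :=
      fun c => Finset.sum_nonneg fun g _ => I.v_nonneg c g
    refine ⟨j, hj, ?_, fun k _ _ => ?_⟩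
    · rw [key]
      have h1 := FD_mms_le_third I j; have h2 := tot j
      rcases le_or_gt (I.MMS j) 0 with h3 | h3 <;> linarith
    · rw [key]
      have h1 := FD_mms_le_third I k; have h2 := tot k
      rcases le_or_gt (I.MMS k) 0 with h3 | h3 <;> linarith

/-- A "nice" bundle (≥ 2/3 MMS for someone, ≤ MMS for everyone) yields a reducible bundle. -/
lemma FD_nice (I : FairDivision 3 m)
    (hNoRed : ∀ (B : Finset (Fin m)) (i : Fin 3), ¬ I.IsReducible B i)
    (B : Finset (Fin m)) (b : Fin 3)
    (h1 : 2 / 3 * I.MMS b ≤ ∑ g ∈ B, I.v b g)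
    (h2 : ∀ c, ∑ g ∈ B, I.v c g ≤ I.MMS c) : False := by
  have hpos := FD_mms_pos I hNoRed
  apply hNoRed B b
  refine ⟨h1, ?_⟩
  obtain ⟨j, hj⟩ := FD_exists_ne b
  refine ⟨j, hj, ?_, fun k _ _ => ?_⟩
  · rw [FD_sum_compl]
    have := FD_mms_le_third I j; have := h2 j
    linarith
  · rw [FD_sum_compl]
    have := FD_mms_le_third I k; have := h2 k; have := (hpos k).le
    linarith

lemma FD_pair_red (I : FairDivision 3 m)
    (hNoHigh : ∀ a g, I.v a g < 2 / 3 * I.MMS a)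
    (hNoRed : ∀ (B : Finset (Fin m)) (i : Fin 3), ¬ I.IsReducible B i)
    (g g' : Fin m) (hgg : g ≠ g') (b a : Fin 3) (hab : a ≠ b)
    (hb : 2 / 3 * I.MMS b ≤ I.v b g + I.v b g')
    (ha : I.v a g + I.v a g' ≤ I.MMS a) : False := by
  have hpos := FD_mms_pos I hNoRed
  apply hNoRed {g, g'} b
  have hsum : ∀ c : Fin 3, ∑ x ∈ ({g, g'} : Finset (Fin m)), I.v c x = I.v c g + I.v c g' :=
    fun c => Finset.sum_pair hgg
  refine ⟨by rw [hsum]; exact hb, a, hab, ?_, fun k _ _ => ?_⟩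
  · rw [FD_sum_compl, hsum]
    have := FD_mms_le_third I a
    linarith
  · rw [FD_sum_compl, hsum]
    have h1 := hNoHigh k g; have h2 := hNoHigh k g'
    have := FD_mms_le_third I k; have := (hpos k).le
    linarith

/-- Part (i): the pair dichotomy. -/
lemma FD_dichotomy (I : FairDivision 3 m)
    (hNoHigh : ∀ a g, I.v a g < 2 / 3 * I.MMS a)
    (hNoRed : ∀ (B : Finset (Fin m)) (i : Fin 3), ¬ I.IsReducible B i)
    (g g' : Fin m) (hgg : g ≠ g') :
    (∀ a, I.MMS a < I.v a g + I.v a g') ∨ (∀ a, I.v a g + I.v a g' < 2 / 3 * I.MMS a) := by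
  have hpos := FD_mms_pos I hNoRed
  by_cases hall : ∀ a, I.MMS a < I.v a g + I.v a g'
  · exact Or.inl hall
  right
  push_neg at hall
  obtain ⟨a₀, ha₀⟩ := hall
  have step1 : ∀ b, b ≠ a₀ → I.v b g + I.v b g' < 2 / 3 * I.MMS b := by
    intro b hb
    by_contra hc
    push_neg at hc
    exact FD_pair_red I hNoHigh hNoRed g g' hgg b a₀ (Ne.symm hb) hc ha₀
  intro b
  by_cases hb : b = a₀
  · subst hb
    by_contra hc
    push_neg at hc
    obtain ⟨a', ha'⟩ := FD_exists_ne b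
    have h1 := step1 a' ha'
    have h2 := (hpos a').le
    exact FD_pair_red I hNoHigh hNoRed g g' hgg b a' ha' hc (by linarith)
  · exact step1 b hb

/-- The greedy lemma: starting from a bundle below 2/3 of everyone's MMS, adding only
goods small for everyone, if the union reaches 2/3 of someone's MMS then some intermediate
bundle is "nice". -/
lemma FD_greedy (I : FairDivision 3 m)
    (hpos : ∀ c, 0 < I.MMS c) :
    ∀ S B₀ : Finset (Fin m), Disjoint B₀ S →
      (∀ b, ∑ g ∈ B₀, I.v b g < 2 / 3 * I.MMS b) →
      (∀ g ∈ S, ∀ b, I.v b g < 1 / 3 * I.MMS b) →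
      (∃ a, 2 / 3 * I.MMS a ≤ ∑ g ∈ B₀ ∪ S, I.v a g) →
      ∃ B : Finset (Fin m),
        (∃ b, 2 / 3 * I.MMS b ≤ ∑ g ∈ B, I.v b g) ∧ ∀ c, ∑ g ∈ B, I.v c g ≤ I.MMS c := by
  intro S
  induction S using Finset.strongInduction with
  | _ S ih =>
    intro B₀ hdisj hB₀ hsmall hex
    by_cases hall : ∀ c, ∑ g ∈ B₀ ∪ S, I.v c g ≤ I.MMS c
    · exact ⟨B₀ ∪ S, hex, hall⟩
    · push_neg at hall
      obtain ⟨c, hc⟩ := hall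
      have hS : S.Nonempty := by
        rcases S.eq_empty_or_nonempty with rfl | h
        · exfalso
          rw [Finset.union_empty] at hc
          have := hB₀ c; have := hpos c
          linarith
        · exact h
      obtain ⟨g, hg⟩ := hS
      have hsub : S.erase g ⊂ S := Finset.erase_ssubset hg
      have hnotmem : g ∉ B₀ ∪ S.erase g := by
        intro hmem
        rcases Finset.mem_union.mp hmem with h | h
        · exact (Finset.disjoint_left.mp hdisj h) hg
        · exact (Finset.notMem_erase g S) h
      have hsplit : B₀ ∪ S = insert g (B₀ ∪ S.erase g) := by
        rw [← Finset.union_insert, Finset.insert_erase hg]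
      have hsum : ∑ x ∈ B₀ ∪ S, I.v c x = I.v c g + ∑ x ∈ B₀ ∪ S.erase g, I.v c x := by
        rw [hsplit, Finset.sum_insert hnotmem]
      refine ih (S.erase g) hsub B₀ (hdisj.mono_right (Finset.erase_subset g S)) hB₀
        (fun x hx b => hsmall x (Finset.mem_of_mem_erase hx) b) ⟨c, ?_⟩
      have := hsmall g hg c
      linarith

/-- Part (ii): existence of a pair above everyone's MMS. -/
lemma FD_exists_pair (I : FairDivision 3 m)
    (hNoHigh : ∀ a g, I.v a g < 2 / 3 * I.MMS a)
    (hNoRed : ∀ (B : Finset (Fin m)) (i : Fin 3), ¬ I.IsReducible B i) :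
    ∃ o o' : Fin m, o ≠ o' ∧ ∀ a, I.MMS a < I.v a o + I.v a o' := by
  have hpos := FD_mms_pos I hNoRed
  by_contra hno
  push_neg at hno
  have pairlow : ∀ g g' : Fin m, g ≠ g' → ∀ a, I.v a g + I.v a g' < 2 / 3 * I.MMS a := by
    intro g g' h a
    rcases FD_dichotomy I hNoHigh hNoRed g g' h with h1 | h2
    · obtain ⟨a', ha'⟩ := hno g g' h
      exact absurd (h1 a') (not_lt.2 ha')
    · exact h2 a
  classical
  set D : Finset (Fin m) := Finset.univ.filter (fun g => ∃ b, 1 / 3 * I.MMS b ≤ I.v b g)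
    with hD
  -- each agent has at most one medium good
  have hDb : ∀ b : Fin 3,
      (Finset.univ.filter (fun g => 1 / 3 * I.MMS b ≤ I.v b g)).card ≤ 1 := by
    intro b
    apply Finset.card_le_one.mpr
    intro x hx y hy
    by_contra hxy
    have hxv := (Finset.mem_filter.mp hx).2
    have hyv := (Finset.mem_filter.mp hy).2
    have := pairlow x y hxy b
    linarith
  have hDcard : D.card ≤ 3 := by
    have hsub : D ⊆ (Finset.univ.filter (fun g => 1 / 3 * I.MMS 0 ≤ I.v 0 g)) ∪
        ((Finset.univ.filter (fun g => 1 / 3 * I.MMS 1 ≤ I.v 1 g)) ∪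
         (Finset.univ.filter (fun g => 1 / 3 * I.MMS 2 ≤ I.v 2 g))) := by
      intro g hg
      obtain ⟨b, hb⟩ := (Finset.mem_filter.mp hg).2
      fin_cases b
      · exact Finset.mem_union.mpr (Or.inl (Finset.mem_filter.mpr ⟨Finset.mem_univ g, hb⟩))
      · exact Finset.mem_union.mpr (Or.inr (Finset.mem_union.mpr
          (Or.inl (Finset.mem_filter.mpr ⟨Finset.mem_univ g, hb⟩))))
      · exact Finset.mem_union.mpr (Or.inr (Finset.mem_union.mpr
          (Or.inr (Finset.mem_filter.mpr ⟨Finset.mem_univ g, hb⟩))))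
    calc D.card ≤ _ := Finset.card_le_card hsub
      _ ≤ _ := Finset.card_union_le _ _
      _ ≤ 1 + (1 + 1) := by
          have h0 := hDb 0; have h1 := hDb 1; have h2 := hDb 2
          have := Finset.card_union_le
            (Finset.univ.filter (fun g => 1 / 3 * I.MMS 1 ≤ I.v 1 g))
            (Finset.univ.filter (fun g => 1 / 3 * I.MMS 2 ≤ I.v 2 g))
          omega
      _ ≤ 3 := by norm_num
  -- any bundle of at most three goods is worth at most MMS to everyone
  have hsmallcard : ∀ (c : Fin 3) (T : Finset (Fin m)), T.card ≤ 3 →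
      ∑ g ∈ T, I.v c g ≤ I.MMS c := by
    intro c T hT
    have h4 : T.card = 0 ∨ T.card = 1 ∨ T.card = 2 ∨ T.card = 3 := by omega
    rcases h4 with h | h | h | h
    · rw [Finset.card_eq_zero] at h
      subst h
      rw [Finset.sum_empty]
      exact (hpos c).le
    · obtain ⟨x, rfl⟩ := Finset.card_eq_one.mp h
      rw [Finset.sum_singleton]
      have := hNoHigh c x; have := hpos c
      linarith
    · obtain ⟨x, y, hxy, rfl⟩ := Finset.card_eq_two.mp h
      rw [Finset.sum_pair hxy]
      have := pairlow x y hxy c; have := hpos c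
      linarith
    · obtain ⟨x, y, z, hxy, hxz, hyz, rfl⟩ := Finset.card_eq_three.mp h
      have hxmem : x ∉ ({y, z} : Finset (Fin m)) := by
        simp only [Finset.mem_insert, Finset.mem_singleton]
        push_neg
        exact ⟨hxy, hxz⟩
      rw [Finset.sum_insert hxmem, Finset.sum_pair hyz]
      have h1 := pairlow x y hxy c
      have h2 := pairlow x z hxz c
      have h3 := pairlow y z hyz c
      have := hpos c
      linarith
  by_cases hDbig : ∃ b, 2 / 3 * I.MMS b ≤ ∑ g ∈ D, I.v b g
  · obtain ⟨b, hb⟩ := hDbig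
    exact FD_nice I hNoRed D b hb (fun c => hsmallcard c D hDcard)
  · push_neg at hDbig
    have hsm : ∀ g ∈ Dᶜ, ∀ b, I.v b g < 1 / 3 * I.MMS b := by
      intro g hg b
      have : ¬ ∃ b, 1 / 3 * I.MMS b ≤ I.v b g := by
        intro hc
        exact (Finset.mem_compl.mp hg) (Finset.mem_filter.mpr ⟨Finset.mem_univ g, hc⟩)
      push_neg at this
      exact this b
    have hex : ∃ a, 2 / 3 * I.MMS a ≤ ∑ g ∈ D ∪ Dᶜ, I.v a g := by
      refine ⟨0, ?_⟩
      rw [Finset.union_compl]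
      have := FD_mms_le_third I 0; have := (hpos 0).le
      linarith
    obtain ⟨B, ⟨b, hb⟩, hB2⟩ :=
      FD_greedy I hpos Dᶜ D disjoint_compl_right hDbig hsm hex
    exact FD_nice I hNoRed B b hb hB2

end AuxLemmas

/-- In a three-agent instance with no (2/3)-high-valued good and no reducible
bundle: (i) every pair of goods is valued above `MMS_a` by all agents or below `(2/3)*MMS_a`
by all agents; (ii) some pair of goods is valued above `MMS_a` by all agents; (iii) for every
agent, the total value of her goods worth at most `MMS_a / 3` is less than `MMS_a / 6`. -/
theorem three_agent_no_reducible_structure (m : ℕ) (I : FairDivision 3 m)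
    (hNoHigh : ∀ a g, I.v a g < 2 / 3 * I.MMS a)
    (hNoRed : ∀ (B : Finset (Fin m)) (i : Fin 3), ¬ I.IsReducible B i) :
    (∀ g g' : Fin m, g ≠ g' →
      (∀ a, I.MMS a < I.v a g + I.v a g') ∨ (∀ a, I.v a g + I.v a g' < 2 / 3 * I.MMS a)) ∧
    (∃ o o' : Fin m, o ≠ o' ∧ ∀ a, I.MMS a < I.v a o + I.v a o') ∧
    (∀ a, (∑ g ∈ Finset.univ.filter fun g => I.v a g ≤ I.MMS a / 3, I.v a g)
      < I.MMS a / 6) := by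
  have hpos := FD_mms_pos I hNoRed
  refine ⟨FD_dichotomy I hNoHigh hNoRed, FD_exists_pair I hNoHigh hNoRed, ?_⟩
  intro a
  classical
  set Sa : Finset (Fin m) := Finset.univ.filter (fun g => I.v a g ≤ I.MMS a / 3) with hSa
  by_contra hcon
  push_neg at hcon
  obtain ⟨o, o', hoo, hhigh⟩ := FD_exists_pair I hNoHigh hNoRed
  have key : ∀ p q : Fin m, p ≠ q → (∀ b, I.MMS b < I.v b p + I.v b q) →
      I.MMS a / 2 < I.v a p → False := by
    intro p q hpq hh hhalf
    have hpbig : ∀ b, 1 / 3 * I.MMS b < I.v b p := by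
      intro b
      have h1 := hh b; have h2 := hNoHigh b q
      linarith
    have hsm : ∀ g ∈ Sa, ∀ b, I.v b g < 1 / 3 * I.MMS b := by
      intro g hg b
      have hga : I.v a g ≤ I.MMS a / 3 := (Finset.mem_filter.mp hg).2
      have hgp : g ≠ p := by
        rintro rfl
        have := hpbig a
        linarith
      rcases FD_dichotomy I hNoHigh hNoRed g p hgp with h1 | h2
      · have := h1 a; have := hNoHigh a p
        linarith
      · have := h2 b; have := hpbig b
        linarith
    have hpS : p ∉ Sa := by
      intro hmem
      have := (Finset.mem_filter.mp hmem).2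
      have := hpos a
      linarith
    have hdisj : Disjoint ({p} : Finset (Fin m)) Sa :=
      Finset.disjoint_singleton_left.mpr hpS
    have hB₀ : ∀ b, ∑ g ∈ ({p} : Finset (Fin m)), I.v b g < 2 / 3 * I.MMS b := by
      intro b
      rw [Finset.sum_singleton]
      exact hNoHigh b p
    have hex : ∃ a', 2 / 3 * I.MMS a' ≤ ∑ g ∈ ({p} : Finset (Fin m)) ∪ Sa, I.v a' g := by
      refine ⟨a, ?_⟩
      rw [Finset.sum_union hdisj, Finset.sum_singleton]
      linarith
    obtain ⟨B, ⟨b, hb⟩, hB2⟩ := FD_greedy I hpos Sa {p} hdisj hB₀ hsm hex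
    exact FD_nice I hNoRed B b hb hB2
  rcases le_total (I.v a o') (I.v a o) with h | h
  · exact key o o' hoo hhigh (by have := hhigh a; linarith)
  · exact key o' o (Ne.symm hoo) (fun b => by have := hhigh b; linarith)
      (by have := hhigh a; linarith)
end

section
/- Consider a three-agent instance that contains no (2/3)-high-valued good (v_a(g) < (2/3)·MMS_a for every agent a and good g) and in which no subset of whole goods is a reducible bundle with respect to any agent. Then the set M̂ = {g ∈ M : v_a(g) > MMS_a/3 for every agent a} contains at least five goods. -/
open scoped BigOperators Classical

lemma fin3_unique (i j x y : Fin 3) (h1 : j ≠ i) (h2 : x ≠ i) (h3 : x ≠ j)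
    (h4 : y ≠ i) (h5 : y ≠ j) : x = y := by
  simp only [Ne, Fin.ext_iff] at *
  have := i.isLt; have := j.isLt; have := x.isLt; have := y.isLt
  omega

lemma fin3_third (i j : Fin 3) (h : i ≠ j) : ∃ k : Fin 3, k ≠ i ∧ k ≠ j := by
  have hij : i.val ≠ j.val := fun hv => h (Fin.ext hv)
  have := i.isLt; have := j.isLt
  refine ⟨⟨3 - i.val - j.val, by omega⟩, ?_, ?_⟩ <;>
    · simp only [Ne, Fin.ext_iff]; omega

lemma fin3_pair (i : Fin 3) : ∃ j k : Fin 3, j ≠ i ∧ k ≠ i ∧ k ≠ j := by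
  have := i.isLt
  refine ⟨⟨(i.val + 1) % 3, by omega⟩, ⟨(i.val + 2) % 3, by omega⟩, ?_, ?_, ?_⟩ <;>
    · simp only [Ne, Fin.ext_iff]; omega

lemma extract_aux {m : ℕ} (f : Fin m → ℝ) (δ c : ℝ)
    (hδ : 0 < δ) (hc : 0 ≤ c) :
    ∀ B : Finset (Fin m), (∀ g ∈ B, f g < δ) → c ≤ ∑ g ∈ B, f g →
      ∃ B' ⊆ B, c ≤ ∑ g ∈ B', f g ∧ ∑ g ∈ B', f g < c + δ := by
  intro B
  induction B using Finset.strongInduction with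
  | _ B ih =>
    intro hB hsum
    by_cases h : ∑ g ∈ B, f g < c + δ
    · exact ⟨B, subset_rfl, hsum, h⟩
    · push_neg at h
      have hne : B.Nonempty := by
        rcases B.eq_empty_or_nonempty with rfl | hne
        · simp only [Finset.sum_empty] at h; exfalso; nlinarith
        · exact hne
      obtain ⟨g, hg⟩ := hne
      have herase : ∑ x ∈ B.erase g, f x + f g = ∑ x ∈ B, f x := Finset.sum_erase_add _ _ hg
      obtain ⟨B', hB', h1, h2⟩ := ih (B.erase g) (Finset.erase_ssubset hg)
        (fun g' hg' => hB g' (Finset.mem_of_mem_erase hg'))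
        (by have := hB g hg; linarith)
      exact ⟨B', hB'.trans (Finset.erase_subset _ _), h1, h2⟩

lemma mms_le_third {m : ℕ} (I : FairDivision 3 m) (i : Fin 3) :
    3 * I.MMS i ≤ ∑ g, I.v i g := by
  have hV0 : (0:ℝ) ≤ ∑ g, I.v i g := Finset.sum_nonneg fun g _ => I.v_nonneg i g
  have hle : I.MMS i ≤ (∑ g, I.v i g) / 3 := by
    apply Real.sSup_le
    · rintro x ⟨P, hP, rfl⟩
      have hb : BddBelow (Set.range fun j => I.util i (P j)) :=
        (Set.finite_range _).bddBelow
      have h0 := ciInf_le hb (0 : Fin 3)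
      have h1 := ciInf_le hb (1 : Fin 3)
      have h2 := ciInf_le hb (2 : Fin 3)
      have hsum : ∑ j : Fin 3, I.util i (P j) ≤ ∑ g, I.v i g := by
        have hswap : ∑ j : Fin 3, I.util i (P j)
            = ∑ g, ∑ j : Fin 3, I.frUtil i g (P j g) := by
          simp only [FairDivision.util]
          exact Finset.sum_comm
        rw [hswap]
        apply Finset.sum_le_sum
        intro g _
        have hle1 : ∀ j : Fin 3, I.frUtil i g (P j g) ≤ P j g * I.v i g := by
          intro j
          have h01 := hP.1 j g
          unfold FairDivision.frUtil
          split_ifs with hd ht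
          · exact le_refl _
          · rw [ht, one_mul]
          · exact mul_nonneg h01.1 (I.v_nonneg i g)
        calc ∑ j : Fin 3, I.frUtil i g (P j g)
            ≤ ∑ j : Fin 3, P j g * I.v i g := Finset.sum_le_sum fun j _ => hle1 j
          _ = (∑ j : Fin 3, P j g) * I.v i g := by rw [Finset.sum_mul]
          _ = I.v i g := by rw [hP.2 g, one_mul]
      rw [Fin.sum_univ_three] at hsum
      linarith
    · linarith
  linarith

/-- In a three-agent instance with no (2/3)-high-valued good and no reducible
bundle, the set of goods valued above `MMS_a / 3` by every agent `a` has at least five goods. -/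
theorem three_agent_at_least_five_valuable_goods (m : ℕ) (I : FairDivision 3 m)
    (hNoHigh : ∀ a g, I.v a g < 2 / 3 * I.MMS a)
    (hNoRed : ∀ (B : Finset (Fin m)) (i : Fin 3), ¬ I.IsReducible B i) :
    5 ≤ (Finset.univ.filter fun g => ∀ a : Fin 3, I.MMS a / 3 < I.v a g).card := by
  classical
  by_contra hcard
  push_neg at hcard
  set Mhat : Finset (Fin m) := Finset.univ.filter fun g => ∀ a : Fin 3, I.MMS a / 3 < I.v a g
    with hMhatdef
  -- basic facts
  have hmono : ∀ (a : Fin 3) {B C : Finset (Fin m)}, B ⊆ C →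
      ∑ g ∈ B, I.v a g ≤ ∑ g ∈ C, I.v a g := by
    intro a B C h
    exact Finset.sum_le_sum_of_subset_of_nonneg h (fun g _ _ => I.v_nonneg a g)
  have hcompl : ∀ (a : Fin 3) (B : Finset (Fin m)),
      ∑ g ∈ Bᶜ, I.v a g = (∑ g, I.v a g) - ∑ g ∈ B, I.v a g := by
    intro a B
    have := Finset.sum_compl_add_sum B (I.v a)
    linarith
  have hV3 : ∀ a, 3 * I.MMS a ≤ ∑ g, I.v a g := fun a => mms_le_third I a
  have hVnn : ∀ a, (0:ℝ) ≤ ∑ g, I.v a g := fun a =>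
    Finset.sum_nonneg fun g _ => I.v_nonneg a g
  have hμpos : ∀ a, 0 < I.MMS a := by
    intro a
    by_contra hm
    push_neg at hm
    obtain ⟨j, k, hj, hk, hjk⟩ := fin3_pair a
    refine hNoRed ∅ a ⟨?_, j, hj, ?_, ?_⟩
    · simp only [Finset.sum_empty]; linarith
    · rw [hcompl]; simp only [Finset.sum_empty]; linarith [hV3 j, hVnn j]
    · intro k' _ _
      rw [hcompl]; simp only [Finset.sum_empty]; linarith [hV3 k', hVnn k']
  -- key consequence of non-reducibility
  have key : ∀ (B : Finset (Fin m)) (i j : Fin 3), j ≠ i →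
      2 / 3 * I.MMS i ≤ ∑ g ∈ B, I.v i g →
      2 * I.MMS j ≤ ∑ g ∈ Bᶜ, I.v j g →
      ∃ k, k ≠ i ∧ k ≠ j ∧ ∑ g ∈ Bᶜ, I.v k g < 4 / 3 * I.MMS k := by
    intro B i j hj h1 h2
    by_contra hcon
    push_neg at hcon
    exact hNoRed B i ⟨h1, j, hj, h2, fun k hki hkj => hcon k hki hkj⟩
  -- Lemma L*
  have hLstar : ∀ (E : Finset (Fin m)) (l i : Fin 3), l ≠ i →
      2 / 3 * I.MMS l ≤ ∑ g ∈ E, I.v l g →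
      ∑ g ∈ E, I.v l g < 4 / 3 * I.MMS l →
      ∑ g ∈ E, I.v i g ≤ (∑ g, I.v i g) - 2 * I.MMS i → False := by
    intro E l i hli h1 h2 h3
    have hiE : 2 * I.MMS i ≤ ∑ g ∈ Eᶜ, I.v i g := by rw [hcompl]; linarith
    obtain ⟨k, hkl, hki, hk⟩ := key E l i (Ne.symm hli) h1 hiE
    rw [hcompl] at hk
    have hkE23 : 2 / 3 * I.MMS k ≤ ∑ g ∈ E, I.v k g := by
      linarith [hV3 k, hμpos k]
    obtain ⟨k', hk'1, hk'2, hk'3⟩ := key E k i (Ne.symm hki) hkE23 hiE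
    have hkeq : l = k' := (fin3_unique i k k' l hki hk'2 hk'1 hli (Ne.symm hkl)).symm
    subst hkeq
    rw [hcompl] at hk'3
    linarith [hV3 l, hμpos l]
  -- greedy extraction of a bundle valued in [2/3 μ, 4/3 μ)
  have hextract : ∀ (a : Fin 3) (B : Finset (Fin m)),
      2 / 3 * I.MMS a ≤ ∑ g ∈ B, I.v a g →
      ∃ B' ⊆ B, 2 / 3 * I.MMS a ≤ ∑ g ∈ B', I.v a g ∧
        ∑ g ∈ B', I.v a g < 4 / 3 * I.MMS a := by
    intro a B hB
    obtain ⟨B', hs, h1, h2⟩ := extract_aux (I.v a) (2 / 3 * I.MMS a) (2 / 3 * I.MMS a)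
      (by linarith [hμpos a]) (by linarith [hμpos a]) B (fun g _ => hNoHigh a g) hB
    exact ⟨B', hs, h1, by linarith⟩
  -- the gap lemma
  have hGap : ∀ (D : Finset (Fin m)) (i : Fin 3),
      2 / 3 * I.MMS i ≤ ∑ g ∈ D, I.v i g →
      (∑ g, I.v i g) - 2 * I.MMS i < ∑ g ∈ D, I.v i g := by
    intro D i h1
    by_contra hcon
    push_neg at hcon
    have hex : ∃ l, l ≠ i ∧ 2 / 3 * I.MMS l ≤ ∑ g ∈ D, I.v l g := by
      by_contra h
      push_neg at h
      obtain ⟨j, k, hj, hk, hjk⟩ := fin3_pair i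
      refine hNoRed D i ⟨h1, j, hj, ?_, ?_⟩
      · rw [hcompl]; have := h j hj; linarith [hV3 j, hμpos j]
      · intro k' hk'i _
        rw [hcompl]; have := h k' hk'i; linarith [hV3 k', hμpos k']
    obtain ⟨l, hli, hl⟩ := hex
    obtain ⟨D', hD'1, hD'2, hD'3⟩ := hextract l D hl
    exact hLstar D' l i hli hD'2 hD'3 (le_trans (hmono i hD'1) hcon)
  -- agents agree on which bundles are valuable
  have hR : ∀ (B : Finset (Fin m)) (a b : Fin 3),
      2 / 3 * I.MMS a ≤ ∑ g ∈ B, I.v a g → 2 / 3 * I.MMS b ≤ ∑ g ∈ B, I.v b g := by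
    intro B a b ha
    by_cases hab : b = a
    · subst hab; exact ha
    by_contra hb
    push_neg at hb
    obtain ⟨B', hsub, h1, h2⟩ := hextract a B ha
    have hbB' : ∑ g ∈ B', I.v b g < 2 / 3 * I.MMS b := lt_of_le_of_lt (hmono b hsub) hb
    obtain ⟨c, hca, hcb⟩ := fin3_third a b (Ne.symm hab)
    by_cases hc : 2 / 3 * I.MMS c ≤ ∑ g ∈ B', I.v c g
    · refine hNoRed B' c ⟨hc, b, Ne.symm hcb, ?_, ?_⟩
      · rw [hcompl]; linarith [hV3 b, hμpos b]
      · intro k hk1 hk2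
        have hka : a = k := (fin3_unique c b k a (Ne.symm hcb) hk1 hk2 (Ne.symm hca) (Ne.symm hab)).symm
        subst hka
        rw [hcompl]; linarith [hV3 a, hμpos a]
    · push_neg at hc
      refine hNoRed B' a ⟨h1, b, hab, ?_, ?_⟩
      · rw [hcompl]; linarith [hV3 b, hμpos b]
      · intro k hk1 hk2
        have hkc : c = k := (fin3_unique a b k c hab hk1 hk2 hca hcb).symm
        subst hkc
        rw [hcompl]; linarith [hV3 c, hμpos c]
  -- cheap/dear dichotomy
  have hDich : ∀ B : Finset (Fin m),
      (∀ a, ∑ g ∈ B, I.v a g < 2 / 3 * I.MMS a) ∨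
      (∀ a, (∑ g, I.v a g) - 2 * I.MMS a < ∑ g ∈ B, I.v a g) := by
    intro B
    by_cases h : ∀ a, ∑ g ∈ B, I.v a g < 2 / 3 * I.MMS a
    · exact Or.inl h
    · right
      push_neg at h
      obtain ⟨a0, ha0⟩ := h
      exact fun b => hGap B b (hR B a0 b ha0)
  -- minimal dear bundles
  have hmin : ∀ S : Finset (Fin m),
      (∀ a, (∑ g, I.v a g) - 2 * I.MMS a < ∑ g ∈ S, I.v a g) →
      ∃ D, D ⊆ S ∧ (∀ a, (∑ g, I.v a g) - 2 * I.MMS a < ∑ g ∈ D, I.v a g) ∧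
        (∀ g ∈ D, ∀ a, ∑ g' ∈ D.erase g, I.v a g' < 2 / 3 * I.MMS a) := by
    intro S
    induction S using Finset.strongInduction with
    | _ S ih =>
      intro hS
      by_cases h : ∃ g ∈ S, ∀ a, (∑ g', I.v a g') - 2 * I.MMS a < ∑ g' ∈ S.erase g, I.v a g'
      · obtain ⟨g, hg, hg'⟩ := h
        obtain ⟨D, h1, h2, h3⟩ := ih (S.erase g) (Finset.erase_ssubset hg) hg'
        exact ⟨D, h1.trans (Finset.erase_subset _ _), h2, h3⟩
      · push_neg at h
        refine ⟨S, subset_rfl, hS, fun g hg a => ?_⟩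
        rcases hDich (S.erase g) with hC | hDear
        · exact hC a
        · obtain ⟨y, hy⟩ := h g hg
          exact absurd (hDear y) (not_lt.mpr hy)
  -- every good of a minimal dear bundle lies in Mhat
  have hdear_goods : ∀ D : Finset (Fin m),
      (∀ a, (∑ g, I.v a g) - 2 * I.MMS a < ∑ g ∈ D, I.v a g) →
      (∀ g ∈ D, ∀ a, ∑ g' ∈ D.erase g, I.v a g' < 2 / 3 * I.MMS a) →
      ∀ g ∈ D, g ∈ Mhat := by
    intro D hDear hMin g hg
    refine Finset.mem_filter.mpr ⟨Finset.mem_univ g, fun a => ?_⟩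
    have h1 := hDear a
    have h2 := hMin g hg a
    have h3 : ∑ g' ∈ D.erase g, I.v a g' + I.v a g = ∑ g' ∈ D, I.v a g' :=
      Finset.sum_erase_add _ _ hg
    linarith [hV3 a]
  have hdear_ne : ∀ D : Finset (Fin m),
      (∀ a, (∑ g, I.v a g) - 2 * I.MMS a < ∑ g ∈ D, I.v a g) → D.Nonempty := by
    intro D hDear
    rcases D.eq_empty_or_nonempty with rfl | h
    · exfalso
      have := hDear 0
      simp only [Finset.sum_empty] at this
      linarith [hV3 0, hμpos 0]
    · exact h
  -- Mhat is nonempty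
  have hMhat_ne : Mhat.Nonempty := by
    have hdearM : ∀ a, (∑ g, I.v a g) - 2 * I.MMS a
        < ∑ g ∈ (Finset.univ : Finset (Fin m)), I.v a g := fun a => by linarith [hμpos a]
    obtain ⟨D, hD1, hD2, hD3⟩ := hmin Finset.univ hdearM
    obtain ⟨g, hg⟩ := hdear_ne D hD2
    exact ⟨g, hdear_goods D hD2 hD3 g hg⟩
  -- the complement of Mhat is cheap
  have hUcheap : ∀ a, ∑ g ∈ Mhatᶜ, I.v a g < 2 / 3 * I.MMS a := by
    intro a
    rcases hDich Mhatᶜ with h | h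
    · exact h a
    · exfalso
      obtain ⟨D, hD1, hD2, hD3⟩ := hmin Mhatᶜ h
      obtain ⟨g, hg⟩ := hdear_ne D hD2
      exact (Finset.mem_compl.mp (hD1 hg)) (hdear_goods D hD2 hD3 g hg)
  -- counting: card Mhat ≤ 4
  have hcard4 : (Mhat.card : ℝ) ≤ 4 := by
    exact_mod_cast (by omega : Mhat.card ≤ 4)
  have hMhat_val : ∀ (a : Fin 3) (c : ℝ), (∀ g ∈ Mhat, I.v a g ≤ c) → 0 ≤ c →
      ∑ g ∈ Mhat, I.v a g ≤ 4 * c := by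
    intro a c hc hc0
    have h1 := Finset.sum_le_card_nsmul Mhat (I.v a) c hc
    rw [nsmul_eq_mul] at h1
    have h2 : (Mhat.card : ℝ) * c ≤ 4 * c := mul_le_mul_of_nonneg_right hcard4 hc0
    linarith
  have hUge : ∀ a, I.MMS a / 3 ≤ ∑ g ∈ Mhatᶜ, I.v a g := by
    intro a
    have h1 : ∑ g ∈ Mhat, I.v a g ≤ 4 * (2 / 3 * I.MMS a) :=
      hMhat_val a _ (fun g _ => le_of_lt (hNoHigh a g)) (by linarith [hμpos a])
    have h2 := hcompl a Mhat
    linarith [hV3 a]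
  -- window lemma
  have hwin : ∀ (a : Fin 3) (W : Finset (Fin m)) (g : Fin m), g ∉ W →
      ∑ g' ∈ W, I.v a g' ≤ I.MMS a / 3 →
      I.v a g + ∑ g' ∈ W, I.v a g' < 2 / 3 * I.MMS a := by
    intro a W g hgW hW
    by_contra hcon
    push_neg at hcon
    have hsum : ∑ g' ∈ insert g W, I.v a g' = I.v a g + ∑ g' ∈ W, I.v a g' :=
      Finset.sum_insert hgW
    have := hGap (insert g W) a (by rw [hsum]; exact hcon)
    rw [hsum] at this
    linarith [hNoHigh a g, hV3 a]
  -- collapse lemma for small goods outside Mhat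
  have hcollapse : ∀ (a : Fin 3) (h : Fin m), h ∈ Mhatᶜ → I.v a h ≤ I.MMS a / 3 →
      I.v a h < I.MMS a / 12 := by
    intro a h hhU hsmall
    have hg : ∀ g ∈ Mhat, I.v a g ≤ 2 / 3 * I.MMS a - I.v a h := by
      intro g hgM
      have hgh : g ∉ ({h} : Finset (Fin m)) := by
        simp only [Finset.mem_singleton]
        rintro rfl
        exact (Finset.mem_compl.mp hhU) hgM
      have := hwin a {h} g hgh (by simpa using hsmall)
      simp only [Finset.sum_singleton] at this
      linarith
    have h1 : ∑ g ∈ Mhat, I.v a g ≤ 4 * (2 / 3 * I.MMS a - I.v a h) :=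
      hMhat_val a _ hg (by linarith [hμpos a])
    have h2 := hcompl a Mhat
    have h3 := hUcheap a
    linarith [hV3 a]
  -- each agent has a big good outside Mhat
  have hUbig : ∀ a, ∃ h, h ∈ Mhatᶜ ∧ I.MMS a / 3 < I.v a h := by
    intro a
    by_contra hcon
    push_neg at hcon
    have hsmall : ∀ h ∈ Mhatᶜ, I.v a h < I.MMS a / 12 := fun h hh =>
      hcollapse a h hh (hcon h hh)
    obtain ⟨W, hWU, hW1, hW2⟩ := extract_aux (I.v a) (I.MMS a / 12) (I.MMS a / 4)
      (by linarith [hμpos a]) (by linarith [hμpos a]) Mhatᶜ hsmall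
      (by linarith [hUge a, hμpos a])
    have hWle : ∑ g ∈ W, I.v a g ≤ I.MMS a / 3 := by linarith
    have hg5 : ∀ g ∈ Mhat, I.v a g ≤ 5 / 12 * I.MMS a := by
      intro g hgM
      have hgW : g ∉ W := fun hgw => (Finset.mem_compl.mp (hWU hgw)) hgM
      have := hwin a W g hgW hWle
      linarith
    have h1 : ∑ g ∈ Mhat, I.v a g ≤ 4 * (5 / 12 * I.MMS a) :=
      hMhat_val a _ hg5 (by linarith [hμpos a])
    have h2 := hcompl a Mhat
    linarith [hV3 a, hUcheap a, hμpos a]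
  -- uniqueness of the big good outside Mhat
  have huniq : ∀ (a : Fin 3) (h h' : Fin m), h ∈ Mhatᶜ → h' ∈ Mhatᶜ →
      I.MMS a / 3 < I.v a h → I.MMS a / 3 < I.v a h' → h = h' := by
    intro a h h' hh hh' hb hb'
    by_contra hne
    have hpair : ({h, h'} : Finset (Fin m)) ⊆ Mhatᶜ := by
      intro x hx
      simp only [Finset.mem_insert, Finset.mem_singleton] at hx
      rcases hx with rfl | rfl <;> assumption
    have hsum : ∑ g ∈ ({h, h'} : Finset (Fin m)), I.v a g = I.v a h + I.v a h' :=
      Finset.sum_pair hne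
    have hss := hmono a hpair
    rw [hsum] at hss
    linarith [hUcheap a]
  choose hh hhU hhbig using hUbig
  -- the three chosen big goods cannot all coincide
  have hex : ∃ a b : Fin 3, a ≠ b ∧ hh a ≠ hh b := by
    by_contra hcon
    push_neg at hcon
    have ne01 : (0 : Fin 3) ≠ 1 := by simp only [Ne, Fin.ext_iff]; omega
    have ne02 : (0 : Fin 3) ≠ 2 := by simp only [Ne, Fin.ext_iff]; omega
    have h01 := hcon 0 1 ne01
    have h02 := hcon 0 2 ne02
    have hin : hh 0 ∈ Mhat := by
      refine Finset.mem_filter.mpr ⟨Finset.mem_univ _, fun a => ?_⟩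
      fin_cases a
      · exact hhbig 0
      · rw [h01]; exact hhbig 1
      · rw [h02]; exact hhbig 2
    exact (Finset.mem_compl.mp (hhU 0)) hin
  obtain ⟨a, b, hab, hne⟩ := hex
  have hvbsmall : I.v b (hh a) ≤ I.MMS b / 3 := by
    by_contra hcon
    push_neg at hcon
    exact hne (huniq b (hh a) (hh b) (hhU a) (hhU b) hcon (hhbig b))
  have hvb12 : I.v b (hh a) < I.MMS b / 12 := hcollapse b (hh a) (hhU a) hvbsmall
  obtain ⟨g0, hg0⟩ := hMhat_ne
  have hg0big : ∀ x : Fin 3, I.MMS x / 3 < I.v x g0 := (Finset.mem_filter.mp hg0).2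
  have hg0ne : hh a ≠ g0 := by
    rintro rfl
    exact (Finset.mem_compl.mp (hhU a)) hg0
  have hBsum : ∀ x : Fin 3,
      ∑ g ∈ ({hh a, g0} : Finset (Fin m)), I.v x g = I.v x (hh a) + I.v x g0 :=
    fun x => Finset.sum_pair hg0ne
  refine hNoRed {hh a, g0} a ⟨?_, b, Ne.symm hab, ?_, ?_⟩
  · rw [hBsum a]; linarith [hhbig a, hg0big a]
  · rw [hcompl b, hBsum b]
    linarith [hV3 b, hNoHigh b g0, hvb12, hμpos b]
  · intro k hk1 hk2
    rw [hcompl k, hBsum k]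
    linarith [hV3 k, hNoHigh k g0, hNoHigh k (hh a), hμpos k]
end
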